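/- arXiv:1908.09056 — 4 statements merged into one kernel-verified Lean document; each statement's English description precedes it below -/
import Mathlib

section
/- Let P be a path in Z² and let ξ ∈ {0,1}^{E(𝕃) ∪ E(𝕃*)} be the configuration in which, for every vertex x of P, both edges of the cross at x are open (and all other edges are closed). If f and g are two faces of Z² with f, g ∈ 𝕃 or f, g ∈ 𝕃*, each of which is incident to some vertex of P, then f and g are connected by an open path in ξ. -/
open MeasureTheory Filter Topology
open scoped ENNReal

namespace SixVertex

/-- Vertices of `ℤ²`. -/
abbrev Vx : Type := ℤ × ℤ
/-- Faces of `ℤ²`, i.e. elements of `(ℤ²)* = ℤ² + (1/2,1/2)`; the face `p` corresponds to the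
point `p + (1/2,1/2)`, i.e. to the unit square with corners `p`, `p+(1,0)`, `p+(0,1)`, `p+(1,1)`. -/
abbrev Face : Type := ℤ × ℤ

/-- `ℓ¹` (= graph) distance between faces in `(ℤ²)*`. -/
def fdist (p q : Face) : ℕ := (p.1 - q.1).natAbs + (p.2 - q.2).natAbs

/-- `ℓ¹` (= graph) distance between vertices of `ℤ²`. -/
def vdist (x y : Vx) : ℕ := (x.1 - y.1).natAbs + (x.2 - y.2).natAbs

/-- Adjacency in `ℤ²` (or in `(ℤ²)*`). -/
def VAdj (x y : Vx) : Prop := vdist x y = 1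

/-- The diagonal edges `E(𝕃) ∪ E(𝕃*)`, encoded as pairs `(x, b)` where `x ∈ ℤ²` is the vertex
of `ℤ²` the edge passes through, and `b` tells which of the two diagonals at `x` it is.
The cross at a vertex `x` consists of the two edges `(x, false)` and `(x, true)`. -/
abbrev Edge : Type := Vx × Bool

/-- The two endpoints (faces) of a diagonal edge: `(x, false)` joins the faces `x - (1,1)` and
`x` (the two faces at `x` of the parity of `x`), while `(x, true)` joins `x - (1,0)` and
`x - (0,1)`. -/
def ep (e : Edge) : Face × Face :=
  if e.2 then (e.1 - (1, 0), e.1 - (0, 1)) else (e.1 - (1, 1), e.1)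

/-- The edge `e` belongs to `E(𝕃)` (otherwise it belongs to `E(𝕃*)`). -/
def inL (e : Edge) : Prop := (Even (e.1.1 + e.1.2) ↔ e.2 = false)

/-- Configurations `η ∈ {0,1}^{E(𝕃) ∪ E(𝕃*)}` (the pair `(η⁰, η¹)` is encoded as a single
function on all diagonal edges). -/
abbrev SIConf : Type := Edge → Bool

/-- The cross at `x` is open in `η`. -/
def OpenCross (η : SIConf) (x : Vx) : Prop := η (x, false) = true ∧ η (x, true) = true

/-- No cross is closed in `η`, i.e. `η` is a superimposed configuration (`η ∈ Ω^SI`). -/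
def NoClosedCross (η : SIConf) : Prop := ∀ x : Vx, η (x, false) = true ∨ η (x, true) = true

/-- Two faces joined by an open edge of `η`. -/
def OpenAdj (η : SIConf) (p q : Face) : Prop :=
  ∃ e : Edge, η e = true ∧ (ep e = (p, q) ∨ ep e = (q, p))

/-- Connectivity by open paths. -/
def ConnectedIn (η : SIConf) : Face → Face → Prop := Relation.ReflTransGen (OpenAdj η)

/-- The cluster of the face `p` in `η`. -/
def cluster (η : SIConf) (p : Face) : Set Face := {q | ConnectedIn η p q}

/-- The face `p` is incident to some edge of `Δ`. -/
def TouchesDelta (Δ : Set Edge) (p : Face) : Prop := ∃ e ∈ Δ, (ep e).1 = p ∨ (ep e).2 = p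

/-- `N_Δ(η)`: the number of open crosses of `η` having an edge in `Δ`. -/
noncomputable def NDelta (Δ : Set Edge) (η : SIConf) : ℕ :=
  Set.ncard {x : Vx | OpenCross η x ∧ ((x, false) ∈ Δ ∨ (x, true) ∈ Δ)}

/-- `k_Δ(η) = k_Δ(η⁰) + k_Δ(η¹)`: the total number of clusters of `η` (equivalently, of `η⁰`
in `𝕃` plus those of `η¹` in `𝕃*`, since open edges never join faces of different parity)
containing a face incident to an edge of `Δ`. -/
noncomputable def kDelta (Δ : Set Edge) (η : SIConf) : ℕ :=
  Set.ncard {C : Set Face | ∃ p : Face, TouchesDelta Δ p ∧ C = cluster η p}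

/-- `η` is a superimposed configuration agreeing with `τ` off `Δ` (`η ∈ Ω^{SI,τ}_Δ`). -/
def SIok (Δ : Set Edge) (τ : SIConf) (η : SIConf) : Prop :=
  NoClosedCross η ∧ ∀ e ∉ Δ, η e = τ e

/-- The weight `α^{N_Δ(η)} q^{k_Δ(η)}` of the superimposed model. -/
noncomputable def SIweight (Δ : Set Edge) (α q : ℝ) (η : SIConf) : ℝ≥0∞ :=
  ENNReal.ofReal (α ^ NDelta Δ η * q ^ kDelta Δ η)

/-- The finite-volume superimposed measure `P^{SI,τ}_{Δ,α,q}`. -/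
noncomputable def SIfin (Δ : Set Edge) (α q : ℝ) (τ : SIConf) : Measure SIConf :=
  (∑' η : {η : SIConf // SIok Δ τ η}, SIweight Δ α q η.1)⁻¹ •
    Measure.sum (fun η : {η : SIConf // SIok Δ τ η} => SIweight Δ α q η.1 • Measure.dirac η.1)

/-- The all-open ("wired-wired", `11`) boundary condition. -/
def wiredwired : SIConf := fun _ => true

/-! ### Diamond domains -/

/-- The diamond `Λ = {u : dist(u,v) ≤ n}` of faces. -/
def diamond (v : Face) (n : ℕ) : Set Face := {u | fdist u v ≤ n}

/-- `(v, n)` determines a diamond domain: `v ∈ 𝕃` and `n` a positive even integer. -/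
def IsDiamond (v : Face) (n : ℕ) : Prop := Even (v.1 + v.2) ∧ 0 < n ∧ Even n

/-- The edge of `E(𝕃)` in the cross at `x`. -/
def LEdgeAt (x : Vx) : Edge := if Even (x.1 + x.2) then (x, false) else (x, true)

/-- `Δ(Λ)`: edges of `𝕃` with both endpoints in `Λ`, together with their dual edges
(equivalently: the full crosses whose `𝕃`-edge has both endpoints in `Λ`). -/
def deltaOf (v : Face) (n : ℕ) : Set Edge :=
  {e | (ep (LEdgeAt e.1)).1 ∈ diamond v n ∧ (ep (LEdgeAt e.1)).2 ∈ diamond v n}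

/-! ### Spin configurations -/

/-- Spin configurations on the faces; `true` is the spin `+`, `false` the spin `-`. -/
abbrev SpinConf : Type := Face → Bool

/-- The ice rule: at each vertex of `ℤ²`, at least one of the two diagonals consists of
equal spins. -/
def IceRule (σ : SpinConf) : Prop :=
  ∀ x : Vx, σ (x - (1, 1)) = σ x ∨ σ (x - (1, 0)) = σ (x - (0, 1))

/-- `x` is a saddle point of `σ`: both diagonals at `x` have constant spin. -/
def Saddle (σ : SpinConf) (x : Vx) : Prop :=
  σ (x - (1, 1)) = σ x ∧ σ (x - (1, 0)) = σ (x - (0, 1))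

/-- The face `p` is incident to the vertex `x` of `ℤ²` (i.e. `x` is a corner of `p`). -/
def FaceInc (p : Face) (x : Vx) : Prop :=
  ∃ a ∈ ({0, 1} : Set ℤ), ∃ b ∈ ({0, 1} : Set ℤ), p = x - (a, b)

/-- Vertices of `𝛬̂`: vertices of `ℤ²` on or inside the circuit `∂†Λ`, i.e. corners of
faces of `Λ`. -/
def HatVert (v : Face) (n : ℕ) (x : Vx) : Prop := ∃ p ∈ diamond v n, FaceInc p x

/-- Internal vertices of `𝛬̂`: vertices all of whose four incident `ℤ²`-edges belong to the
induced subgraph `𝛬̂`. -/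
def InternalVert (v : Face) (n : ℕ) (x : Vx) : Prop :=
  HatVert v n x ∧ ∀ y : Vx, VAdj x y → HatVert v n y

/-- `#saddle_Λ(σ)`: the number of saddle points of `σ` among internal vertices of `𝛬̂`. -/
noncomputable def saddleCount (v : Face) (n : ℕ) (σ : SpinConf) : ℕ :=
  Set.ncard {x : Vx | InternalVert v n x ∧ Saddle σ x}

/-- `Ω^{spin,ij}_Λ`: spin configurations satisfying the ice rule, equal to `i` on the outer
boundary of `Λ` and on all of `𝕃*` outside `Λ`, and equal to `j` on the inner boundary of `Λ`
and on all of `𝕃` outside `Λ`.  (All faces at distance `≥ n` from the center receive the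
boundary spin of their sublattice.) -/
def OmegaSpin (v : Face) (n : ℕ) (i j : Bool) (σ : SpinConf) : Prop :=
  IceRule σ ∧ ∀ p : Face, n ≤ fdist p v → σ p = (if Even (p.1 + p.2) then j else i)

/-- The weight `c^{#saddle_Λ(σ)}`. -/
noncomputable def spinWeight (v : Face) (n : ℕ) (c : ℝ) (σ : SpinConf) : ℝ≥0∞ :=
  ENNReal.ofReal (c ^ saddleCount v n σ)

/-- The finite-volume spin measure `P^{spin,ij}_{Λ,c}`. -/
noncomputable def spinFin (v : Face) (n : ℕ) (c : ℝ) (i j : Bool) : Measure SpinConf :=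
  (∑' σ : {σ : SpinConf // OmegaSpin v n i j σ}, spinWeight v n c σ.1)⁻¹ •
    Measure.sum (fun σ : {σ : SpinConf // OmegaSpin v n i j σ} =>
      spinWeight v n c σ.1 • Measure.dirac σ.1)

/-- Compatibility `σ ∼ η`: every open edge of `η` has endpoints with equal spins. -/
def Compat (σ : SpinConf) (η : SIConf) : Prop :=
  ∀ e : Edge, η e = true → σ (ep e).1 = σ (ep e).2

/-! ### Bernoulli site percolation on `ℤ²` and its critical probability -/

/-- `ν` is the law of i.i.d. Bernoulli(`p`) site percolation on `ℤ²`. -/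
def IsBernoulliField (p : ℝ) (ν : Measure (Vx → Bool)) : Prop :=
  IsProbabilityMeasure ν ∧
    ∀ (S : Finset Vx) (s : Vx → Bool),
      ν {ω | ∀ x ∈ S, ω x = s x} =
        ∏ x ∈ S, (if s x = true then ENNReal.ofReal p else ENNReal.ofReal (1 - p))

/-- Site-percolation adjacency: neighbouring open sites. -/
def SiteOpenAdj (ω : Vx → Bool) (x y : Vx) : Prop := VAdj x y ∧ ω x = true ∧ ω y = true

/-- The open cluster of a site. -/
def siteCluster (ω : Vx → Bool) (x : Vx) : Set Vx :=
  {y | Relation.ReflTransGen (SiteOpenAdj ω) x y}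

/-- The critical probability `p_c` of Bernoulli site percolation on `ℤ²`: the supremum of
`p ∈ [0,1]` for which Bernoulli(`p`) site percolation a.s. has no infinite open cluster. -/
noncomputable def pcSite : ℝ :=
  sSup {p : ℝ | 0 ≤ p ∧ p ≤ 1 ∧ ∀ ν : Measure (Vx → Bool), IsBernoulliField p ν →
    ν {ω | ∃ x, ω x = true ∧ (siteCluster ω x).Infinite} = 0}

/-! ### Infinite-volume limits -/

/-- A sequence of diamond domains increasing to `(ℤ²)*`. -/
def DiamondExhaustion (v : ℕ → Face) (n : ℕ → ℕ) : Prop :=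
  (∀ k, IsDiamond (v k) (n k)) ∧
  (∀ k, diamond (v k) (n k) ⊆ diamond (v (k + 1)) (n (k + 1))) ∧
  (∀ u : Face, ∃ k, u ∈ diamond (v k) (n k))

/-- `P` is the weak limit of the finite-volume superimposed measures with boundary condition
`τ` along any sequence of diamond domains increasing to `(ℤ²)*`. -/
def IsSILimitFor (α q : ℝ) (τ : SIConf) (P : Measure SIConf) : Prop :=
  ∀ (v : ℕ → Face) (n : ℕ → ℕ), DiamondExhaustion v n →
    ∀ f : SIConf → ℝ, Continuous f → (∃ M, ∀ η, |f η| ≤ M) →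
      Tendsto (fun k => ∫ η, f η ∂(SIfin (deltaOf (v k) (n k)) α q τ)) atTop
        (nhds (∫ η, f η ∂P))

/-- `P` is the infinite-volume superimposed measure `P^{SI}_{α,q}`: the common weak limit of
the finite-volume measures over all boundary conditions. -/
def IsSILimit (α q : ℝ) (P : Measure SIConf) : Prop :=
  IsProbabilityMeasure P ∧ ∀ τ : SIConf, NoClosedCross τ → IsSILimitFor α q τ P

/-- `P` is the weak limit `P^{spin,ij}_c` of the finite-volume spin measures along any
sequence of diamond domains increasing to `(ℤ²)*`. -/
def IsSpinLimit (c : ℝ) (i j : Bool) (P : Measure SpinConf) : Prop :=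
  IsProbabilityMeasure P ∧
    ∀ (v : ℕ → Face) (n : ℕ → ℕ), DiamondExhaustion v n →
      ∀ f : SpinConf → ℝ, Continuous f → (∃ M, ∀ σ, |f σ| ≤ M) →
        Tendsto (fun k => ∫ σ, f σ ∂(spinFin (v k) (n k) c i j)) atTop (nhds (∫ σ, f σ ∂P))

end SixVertex

namespace SixVertex

/-- Parity of a face, as a boolean. -/
def parB (p : Face) : Bool := decide (Even (p.1 + p.2))

/-- Canonical face of parity `c` incident to the vertex `x`. -/
def canon (c : Bool) (x : Vx) : Face := if parB x = c then x else x - (1, 0)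

lemma parB_eq_iff {p q : Face} : parB p = parB q ↔ (p.1 + p.2) % 2 = (q.1 + q.2) % 2 := by
  simp only [parB, decide_eq_decide, Int.even_iff]
  omega

lemma parB_not_iff {p q : Face} : parB p = !parB q ↔ ¬ (p.1 + p.2) % 2 = (q.1 + q.2) % 2 := by
  cases hp : parB p <;> cases hq : parB q <;>
    simp_all [parB, Int.even_iff] <;> omega

lemma connectedIn_symm {η : SIConf} {p q : Face} (h : ConnectedIn η p q) :
    ConnectedIn η q p := by
  induction h with
  | refl => exact .refl
  | tail _ h2 ih =>
      refine Relation.ReflTransGen.head ?_ ih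
      obtain ⟨e, he, hpq⟩ := h2
      exact ⟨e, he, hpq.symm⟩

lemma faceInc_iff {p : Face} {x : Vx} :
    FaceInc p x ↔ ((p.1 = x.1 ∨ p.1 = x.1 - 1) ∧ (p.2 = x.2 ∨ p.2 = x.2 - 1)) := by
  constructor
  · rintro ⟨a, ha, b, hb, rfl⟩
    simp only [Set.mem_insert_iff, Set.mem_singleton_iff] at ha hb
    rcases ha with rfl | rfl <;> rcases hb with rfl | rfl <;> simp
  · rintro ⟨h1, h2⟩
    refine ⟨x.1 - p.1, ?_, x.2 - p.2, ?_, ?_⟩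
    · simp only [Set.mem_insert_iff, Set.mem_singleton_iff]; omega
    · simp only [Set.mem_insert_iff, Set.mem_singleton_iff]; omega
    · apply Prod.ext <;> simp

lemma faceInc_canon (c : Bool) (x : Vx) : FaceInc (canon c x) x := by
  rw [faceInc_iff]
  unfold canon
  split <;> simp

lemma parB_canon (c : Bool) (x : Vx) : parB (canon c x) = c := by
  unfold canon
  by_cases h : parB x = c
  · simp [h]
  · rw [if_neg h]
    have hc : c = !parB x := by
      cases c <;> cases hx : parB x <;> simp_all
    rw [hc, parB_not_iff]
    simp; omega

lemma conn_to_canon {η : SIConf} {x : Vx} (hx : OpenCross η x) {p : Face}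
    (hp : FaceInc p x) : ConnectedIn η p (canon (parB p) x) := by
  obtain ⟨a, ha, b, hb, rfl⟩ := hp
  simp only [Set.mem_insert_iff, Set.mem_singleton_iff] at ha hb
  have hx00 : x - ((0 : ℤ), (0 : ℤ)) = x := by apply Prod.ext <;> simp
  rcases ha with rfl | rfl <;> rcases hb with rfl | rfl
  · -- p = x
    rw [hx00]
    have hc : canon (parB x) x = x := by simp [canon]
    rw [hc]
    exact .refl
  · -- p = x - (0,1), connected to canon = x - (1,0)
    have hpar : parB (x - ((0 : ℤ), (1 : ℤ))) = !parB x := by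
      rw [parB_not_iff]; simp; omega
    have hcan : canon (!parB x) x = x - (1, 0) := by
      rw [canon, if_neg (by cases parB x <;> simp)]
    rw [hpar, hcan]
    refine Relation.ReflTransGen.single ⟨(x, true), hx.2, Or.inr ?_⟩
    simp [ep]
  · -- p = x - (1,0) = canon
    have hpar : parB (x - ((1 : ℤ), (0 : ℤ))) = !parB x := by
      rw [parB_not_iff]; simp; omega
    have hcan : canon (!parB x) x = x - (1, 0) := by
      rw [canon, if_neg (by cases parB x <;> simp)]
    rw [hpar, hcan]
    exact .refl
  · -- p = x - (1,1), connected to canon = x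
    have hpar : parB (x - ((1 : ℤ), (1 : ℤ))) = parB x := by
      rw [parB_eq_iff]; simp; omega
    have hcan : canon (parB x) x = x := by simp [canon]
    rw [hpar, hcan]
    exact Relation.ReflTransGen.single ⟨(x, false), hx.1, Or.inl (by simp [ep])⟩

lemma conn_at {η : SIConf} {x : Vx} (hx : OpenCross η x) {p q : Face}
    (hp : FaceInc p x) (hq : FaceInc q x) (hpar : parB p = parB q) :
    ConnectedIn η p q :=
  (conn_to_canon hx hp).trans (hpar ▸ connectedIn_symm (conn_to_canon hx hq))

lemma shared (c : Bool) {x y : Vx} (h : VAdj x y) :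
    ∃ s : Face, FaceInc s x ∧ FaceInc s y ∧ parB s = c := by
  have h' : (x.1 - y.1).natAbs + (x.2 - y.2).natAbs = 1 := h
  -- candidate faces: depending on direction, a pair of opposite-parity faces incident to both
  have key : ∃ s₁ s₂ : Face, FaceInc s₁ x ∧ FaceInc s₁ y ∧ FaceInc s₂ x ∧ FaceInc s₂ y ∧
      parB s₂ = !parB s₁ := by
    have h4 : (y.1 = x.1 + 1 ∧ y.2 = x.2) ∨ (y.1 = x.1 - 1 ∧ y.2 = x.2) ∨
        (y.1 = x.1 ∧ y.2 = x.2 + 1) ∨ (y.1 = x.1 ∧ y.2 = x.2 - 1) := by omega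
    rcases h4 with ⟨h1, h2⟩ | ⟨h1, h2⟩ | ⟨h1, h2⟩ | ⟨h1, h2⟩
    · exact ⟨(x.1, x.2), (x.1, x.2 - 1), by rw [faceInc_iff]; simp,
        by rw [faceInc_iff]; omega, by rw [faceInc_iff]; omega,
        by rw [faceInc_iff]; omega, by rw [parB_not_iff]; omega⟩
    · exact ⟨(x.1 - 1, x.2), (x.1 - 1, x.2 - 1), by rw [faceInc_iff]; simp,
        by rw [faceInc_iff]; omega, by rw [faceInc_iff]; omega,
        by rw [faceInc_iff]; omega, by rw [parB_not_iff]; omega⟩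
    · exact ⟨(x.1, x.2), (x.1 - 1, x.2), by rw [faceInc_iff]; simp,
        by rw [faceInc_iff]; omega, by rw [faceInc_iff]; omega,
        by rw [faceInc_iff]; omega, by rw [parB_not_iff]; omega⟩
    · exact ⟨(x.1, x.2 - 1), (x.1 - 1, x.2 - 1), by rw [faceInc_iff]; omega,
        by rw [faceInc_iff]; omega, by rw [faceInc_iff]; omega,
        by rw [faceInc_iff]; omega, by rw [parB_not_iff]; omega⟩
  obtain ⟨s₁, s₂, h1x, h1y, h2x, h2y, hps⟩ := key
  by_cases hc : parB s₁ = c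
  · exact ⟨s₁, h1x, h1y, hc⟩
  · refine ⟨s₂, h2x, h2y, ?_⟩
    rw [hps]
    cases c <;> cases hs : parB s₁ <;> simp_all

/-- Let `P` be a path in `ℤ²` and let `ξ` be the configuration in which, for every vertex of `P`,
both edges of the cross at that vertex are open (and all other edges are closed).  If `f` and
`g` are two faces of `ℤ²`, both in `𝕃` or both in `𝕃*`, each of which is incident to some
vertex of `P`, then `f` and `g` are connected by an open path in `ξ`. -/
theorem stmt_6 (n : ℕ) (P : Fin (n + 1) → Vx)
    (hP : ∀ k : Fin n, VAdj (P k.castSucc) (P k.succ))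
    (f g : Face) (hpar : Even (f.1 + f.2) ↔ Even (g.1 + g.2))
    (hf : ∃ k, FaceInc f (P k)) (hg : ∃ k, FaceInc g (P k)) :
    ConnectedIn (fun e => decide (∃ k, P k = e.1)) f g := by
  set ξ : SIConf := fun e => decide (∃ k, P k = e.1) with hξ
  have hopen : ∀ k : Fin (n + 1), OpenCross ξ (P k) := fun k =>
    ⟨decide_eq_true ⟨k, rfl⟩, decide_eq_true ⟨k, rfl⟩⟩
  have chain : ∀ (c : Bool) (k : Fin (n + 1)),
      ConnectedIn ξ (canon c (P 0)) (canon c (P k)) := by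
    intro c k
    induction k using Fin.induction with
    | zero => exact .refl
    | succ i ih =>
        obtain ⟨s, hs1, hs2, hs3⟩ := shared c (hP i)
        have c1 : ConnectedIn ξ (canon c (P i.castSucc)) s :=
          conn_at (hopen i.castSucc) (faceInc_canon c _) hs1
            (by rw [parB_canon, hs3])
        have c2 : ConnectedIn ξ s (canon c (P i.succ)) :=
          conn_at (hopen i.succ) hs2 (faceInc_canon c _)
            (by rw [parB_canon, hs3])
        exact ih.trans (c1.trans c2)
  obtain ⟨kf, hkf⟩ := hf
  obtain ⟨kg, hkg⟩ := hg
  have hfg : parB f = parB g := by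
    simp only [parB, decide_eq_decide]; exact hpar
  have h1 : ConnectedIn ξ f (canon (parB f) (P kf)) := conn_to_canon (hopen kf) hkf
  have h2 : ConnectedIn ξ g (canon (parB f) (P kg)) := by
    rw [hfg]; exact conn_to_canon (hopen kg) hkg
  exact (h1.trans (connectedIn_symm (chain (parB f) kf))).trans
    ((chain (parB f) kg).trans (connectedIn_symm h2))

end SixVertex
end

section
/- Fix q ≥ 1 and α > 0. Let Δ ⊂ E(𝕃) ∪ E(𝕃*) be finite and let τ, τ' ∈ Ω^SI be two boundary conditions with τ ⪯ τ'. Then P^{SI,τ'}_{Δ,α,q} stochastically dominates P^{SI,τ}_{Δ,α,q} with respect to ⪯, i.e., ∫ f dP^{SI,τ}_{Δ,α,q} ≤ ∫ f dP^{SI,τ'}_{Δ,α,q} for every bounded measurable function f on {0,1}^{E(𝕃) ∪ E(𝕃*)} that is monotone increasing with respect to ⪯. -/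
/-!
Coding the configurations that agree with `τ` off `Δ` by their values on `Δ`, with the bits of
the `𝕃*`-edges flipped, turns `⪯` into the pointwise order of the Boolean lattice `{0,1}^Δ` and
both measures into measures on that lattice, so Holley's inequality reduces the claim to the
lattice condition `w_τ(a) w_τ'(b) ≤ w_τ(a ∧ b) w_τ'(a ∨ b)`. The number of open crosses is
modular under the `⪯`-meet and join, because every cross has one edge in `𝕃`, one in `𝕃*`, and
is never closed. The number of clusters is supermodular, separately on `𝕃` and on `𝕃*`, because
opening an edge merges at most one pair of clusters and none once its endpoints are connected.
Since `q ≥ 1`, this gives the lattice condition.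
-/

open MeasureTheory Filter Topology
open scoped ENNReal

namespace SixVertex

/-- The partial order `⪯` on `{0,1}^{E(𝕃) ∪ E(𝕃*)}`: pointwise `≤` on `E(𝕃)`-coordinates and
pointwise `≥` on `E(𝕃*)`-coordinates. -/
def PO (η ξ : SIConf) : Prop := ∀ e : Edge, (inL e → η e ≤ ξ e) ∧ (¬ inL e → ξ e ≤ η e)

end SixVertex


theorem holley_div {β : Type*} [DistribLattice β] [OrderBot β] [Fintype β] {F G μ : β → ℝ}
    (hF : 0 ≤ F) (hG : 0 ≤ G) (hFpos : 0 < ∑ a, F a) (hGpos : 0 < ∑ a, G a) (hμ : Monotone μ)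
    (h : ∀ a b, F a * G b ≤ F (a ⊓ b) * G (a ⊔ b)) :
    (∑ a, μ a * F a) / ∑ a, F a ≤ (∑ a, μ a * G a) / ∑ a, G a := by
  have shift : ∀ H : β → ℝ, 0 < ∑ a, H a →
      ∑ a, (μ a - μ ⊥) * (H a / ∑ b, H b) = (∑ a, μ a * H a) / ∑ a, H a - μ ⊥ := by
    intro H hH
    simp only [sub_mul, Finset.sum_sub_distrib, ← mul_div_assoc, ← Finset.sum_div, ← Finset.mul_sum]
    rw [sub_div, mul_div_assoc, div_self hH.ne', mul_one]
  have key := holley (μ := fun a => μ a - μ ⊥) (f := fun a => F a / ∑ b, F b)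
    (g := fun a => G a / ∑ b, G b) (fun a => sub_nonneg.2 (hμ bot_le))
    (fun a => div_nonneg (hF a) hFpos.le) (fun a => div_nonneg (hG a) hGpos.le)
    (fun a b hab => sub_le_sub_right (hμ hab) _)
    (by simp only [← Finset.sum_div, div_self hFpos.ne', div_self hGpos.ne'])
    (fun a b => by
      simp only [div_mul_div_comm]
      exact div_le_div_of_nonneg_right (h a b) (mul_pos hFpos hGpos).le)
  simp only [shift F hFpos, shift G hGpos] at key
  linarith

theorem integral_sum_smul_dirac {Ω ι : Type*} [MeasurableSpace Ω] [MeasurableSingletonClass Ω]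
    [Fintype ι] (c : ι → ENNReal) (hc : ∀ i, c i ≠ ⊤) (x : ι → Ω) (f : Ω → ℝ) :
    ∫ ω, f ω ∂(Measure.sum fun i => c i • Measure.dirac (x i)) = ∑ i, (c i).toReal * f (x i) := by
  rw [Measure.sum_fintype, integral_finsetSum_measure
    (fun i _ => (integrable_dirac (by simp)).smul_measure (hc i))]
  simp [integral_smul_measure, integral_dirac]
namespace SixVertex

open Function

lemma OpenAdj.symm {η : SIConf} {p p' : Face} (h : OpenAdj η p p') : OpenAdj η p' p :=
  let ⟨e, he, hep⟩ := h
  ⟨e, he, hep.symm⟩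

lemma ConnectedIn.symm {η : SIConf} {p p' : Face} (h : ConnectedIn η p p') :
    ConnectedIn η p' p := by
  induction h with
  | refl => exact .refl
  | tail _ hadj ih => exact ih.head hadj.symm

lemma mem_cluster_iff {η : SIConf} {p p' : Face} : p' ∈ cluster η p ↔ ConnectedIn η p p' :=
  Iff.rfl

lemma cluster_eq_cluster_iff {η : SIConf} {p p' : Face} :
    cluster η p = cluster η p' ↔ ConnectedIn η p p' := by
  constructor
  · intro h
    have : p' ∈ cluster η p' := Relation.ReflTransGen.refl
    rwa [← h] at this
  · intro h
    ext r
    exact ⟨h.symm.trans, h.trans⟩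

lemma ConnectedIn.mono {η ζ : SIConf} {p p' : Face} (h : ConnectedIn η p p') (hle : η ≤ ζ) :
    ConnectedIn ζ p p' :=
  Relation.ReflTransGen.mono (fun _ _ ⟨e, he, hep⟩ => ⟨e, Bool.le_iff_imp.1 (hle e) he, hep⟩) _ _ h

def EvenFace (p : Face) : Prop := Even (p.1 + p.2)

lemma inL_iff_evenFace_fst (e : Edge) : inL e ↔ EvenFace (ep e).1 := by
  obtain ⟨⟨x₁, x₂⟩, b⟩ := e
  cases b <;> simp [EvenFace, ep, inL, Int.even_iff] <;> omega

lemma inL_iff_evenFace_snd (e : Edge) : inL e ↔ EvenFace (ep e).2 := by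
  obtain ⟨⟨x₁, x₂⟩, b⟩ := e
  cases b <;> simp [EvenFace, ep, inL, Int.even_iff]; omega

lemma inL_iff_evenFace_of_ep {e : Edge} {p p' : Face} (h : ep e = (p, p') ∨ ep e = (p', p)) :
    inL e ↔ EvenFace p := by
  rcases h with h | h
  · rw [inL_iff_evenFace_fst, h]
  · rw [inL_iff_evenFace_snd, h]

lemma OpenAdj.evenFace_iff {η : SIConf} {p p' : Face} (h : OpenAdj η p p') :
    EvenFace p ↔ EvenFace p' :=
  let ⟨_, _, hep⟩ := h
  (inL_iff_evenFace_of_ep hep).symm.trans (inL_iff_evenFace_of_ep hep.symm)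

lemma ConnectedIn.evenFace_iff {η : SIConf} {p p' : Face} (h : ConnectedIn η p p') :
    EvenFace p ↔ EvenFace p' := by
  induction h with
  | refl => exact .rfl
  | tail _ hadj ih => exact ih.trans hadj.evenFace_iff

/-- Open edges never join faces of different parity, so the cluster of `p` only sees the edges
of the sublattice containing `p`. -/
lemma ConnectedIn.congr {η ζ : SIConf} {p p' : Face} (h : ConnectedIn η p p')
    (hagree : ∀ e, (inL e ↔ EvenFace p) → η e = ζ e) : ConnectedIn ζ p p' := by
  induction h with
  | refl => exact .refl
  | tail hpr hadj ih =>
    obtain ⟨e, he, hep⟩ := hadj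
    have hpar : inL e ↔ EvenFace p :=
      (inL_iff_evenFace_of_ep hep).trans (ConnectedIn.evenFace_iff hpr).symm
    exact ih.tail ⟨e, hagree e hpar ▸ he, hep⟩

lemma cluster_congr {η ζ : SIConf} {p : Face} (hagree : ∀ e, (inL e ↔ EvenFace p) → η e = ζ e) :
    cluster η p = cluster ζ p := by
  ext p'
  exact ⟨fun h => h.congr hagree, fun h => h.congr fun e he => (hagree e he).symm⟩

lemma le_update_true (ζ : SIConf) (e : Edge) : ζ ≤ update ζ e true :=
  le_update_iff.2 ⟨le_top, fun _ _ => le_rfl⟩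

lemma connectedIn_update_iff {ζ : SIConf} {e : Edge} {r s : Face} :
    ConnectedIn (update ζ e true) r s ↔ ConnectedIn ζ r s ∨
      (ConnectedIn ζ r (ep e).1 ∧ ConnectedIn ζ (ep e).2 s) ∨
      (ConnectedIn ζ r (ep e).2 ∧ ConnectedIn ζ (ep e).1 s) := by
  constructor
  · intro h
    induction h with
    | refl => exact .inl .refl
    | tail _ hadj ih =>
      obtain ⟨e', he', hep⟩ := hadj
      by_cases hee' : e' = e
      · subst hee'
        rcases hep with hep | hep <;> obtain ⟨rfl, rfl⟩ := Prod.ext_iff.1 hep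
        · rcases ih with h | ⟨h, -⟩ | ⟨h, -⟩
          · exact .inr (.inl ⟨h, .refl⟩)
          · exact .inr (.inl ⟨h, .refl⟩)
          · exact .inl h
        · rcases ih with h | ⟨h, -⟩ | ⟨h, -⟩
          · exact .inr (.inr ⟨h, .refl⟩)
          · exact .inl h
          · exact .inr (.inr ⟨h, .refl⟩)
      · rw [update_of_ne hee'] at he'
        have hadj : OpenAdj ζ _ _ := ⟨e', he', hep⟩
        rcases ih with h | ⟨h₁, h₂⟩ | ⟨h₁, h₂⟩
        · exact .inl (h.tail hadj)
        · exact .inr (.inl ⟨h₁, h₂.tail hadj⟩)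
        · exact .inr (.inr ⟨h₁, h₂.tail hadj⟩)
  · have hmono := le_update_true ζ e
    have hopen : update ζ e true e = true := update_self ..
    rintro (h | ⟨h₁, h₂⟩ | ⟨h₁, h₂⟩)
    · exact h.mono hmono
    · exact ((h₁.mono hmono).tail ⟨e, hopen, .inl rfl⟩).trans (h₂.mono hmono)
    · exact ((h₁.mono hmono).tail ⟨e, hopen, .inr rfl⟩).trans (h₂.mono hmono)

noncomputable def clusterCount (S : Set Face) (ζ : SIConf) : ℕ := (cluster ζ '' S).ncard

lemma cluster_update_of_connectedIn_endpoint {ζ : SIConf} {e : Edge} {r : Face}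
    (hr : ConnectedIn ζ r (ep e).1 ∨ ConnectedIn ζ r (ep e).2) :
    cluster (update ζ e true) r = cluster ζ (ep e).1 ∪ cluster ζ (ep e).2 := by
  ext s
  simp only [Set.mem_union, mem_cluster_iff, connectedIn_update_iff]
  constructor
  · rintro (h | ⟨-, h⟩ | ⟨-, h⟩)
    · rcases hr with hr | hr
      · exact .inl (hr.symm.trans h)
      · exact .inr (hr.symm.trans h)
    · exact .inr h
    · exact .inl h
  · rintro (h | h) <;> rcases hr with hr | hr
    · exact .inl (hr.trans h)
    · exact .inr (.inr ⟨hr, h⟩)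
    · exact .inr (.inl ⟨hr, h⟩)
    · exact .inl (hr.trans h)

lemma cluster_update_of_not_connectedIn_endpoint {ζ : SIConf} {e : Edge} {r : Face}
    (h₁ : ¬ ConnectedIn ζ r (ep e).1) (h₂ : ¬ ConnectedIn ζ r (ep e).2) :
    cluster (update ζ e true) r = cluster ζ r := by
  ext s
  simp only [mem_cluster_iff, connectedIn_update_iff]
  exact ⟨fun h => h.elim id fun h => h.elim (absurd ·.1 h₁) (absurd ·.1 h₂), .inl⟩

lemma image_cluster_update {ζ : SIConf} {e : Edge} {S : Set Face} (h₁ : (ep e).1 ∈ S) :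
    cluster (update ζ e true) '' S = insert (cluster ζ (ep e).1 ∪ cluster ζ (ep e).2)
      (cluster ζ '' S \ {cluster ζ (ep e).1, cluster ζ (ep e).2}) := by
  ext C
  simp only [Set.mem_image, Set.mem_insert_iff, Set.mem_sdiff, Set.mem_insert_iff,
    Set.mem_singleton_iff]
  constructor
  · rintro ⟨r, hr, rfl⟩
    by_cases hconn : ConnectedIn ζ r (ep e).1 ∨ ConnectedIn ζ r (ep e).2
    · exact .inl (cluster_update_of_connectedIn_endpoint hconn)
    · rw [not_or] at hconn
      rw [cluster_update_of_not_connectedIn_endpoint hconn.1 hconn.2, cluster_eq_cluster_iff,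
        cluster_eq_cluster_iff]
      exact .inr ⟨⟨r, hr, rfl⟩, fun h => h.elim hconn.1 hconn.2⟩
  · rintro (rfl | ⟨⟨r, hr, rfl⟩, hne⟩)
    · exact ⟨_, h₁, cluster_update_of_connectedIn_endpoint (.inl .refl)⟩
    · rw [cluster_eq_cluster_iff, cluster_eq_cluster_iff] at hne
      exact ⟨r, hr, cluster_update_of_not_connectedIn_endpoint (not_or.1 hne).1 (not_or.1 hne).2⟩

lemma clusterCount_update_of_connectedIn {ζ : SIConf} {e : Edge} {S : Set Face}
    (h₁ : (ep e).1 ∈ S) (h : ConnectedIn ζ (ep e).1 (ep e).2) :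
    clusterCount S (update ζ e true) = clusterCount S ζ := by
  rw [clusterCount, image_cluster_update h₁, ← cluster_eq_cluster_iff.2 h, Set.union_self,
    Set.pair_eq_singleton, Set.insert_sdiff_singleton,
    Set.insert_eq_of_mem (Set.mem_image_of_mem _ h₁), clusterCount]

lemma clusterCount_update_add_one {ζ : SIConf} {e : Edge} {S : Set Face} (hS : S.Finite)
    (h₁ : (ep e).1 ∈ S) (h₂ : (ep e).2 ∈ S) (h : ¬ ConnectedIn ζ (ep e).1 (ep e).2) :
    clusterCount S (update ζ e true) + 1 = clusterCount S ζ := by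
  set C₁ := cluster ζ (ep e).1
  set C₂ := cluster ζ (ep e).2
  have hfin : (cluster ζ '' S).Finite := hS.image _
  have hpair : {C₁, C₂} ⊆ cluster ζ '' S :=
    Set.insert_subset (Set.mem_image_of_mem _ h₁) (Set.singleton_subset_iff.2 ⟨_, h₂, rfl⟩)
  have hmerged : C₁ ∪ C₂ ∉ cluster ζ '' S \ {C₁, C₂} := by
    rintro ⟨⟨r, -, hr⟩, hne⟩
    have : (ep e).1 ∈ cluster ζ r := hr ▸ .inl .refl
    exact hne (.inl (hr.symm.trans (cluster_eq_cluster_iff.2 this)))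
  rw [clusterCount, image_cluster_update h₁, Set.ncard_insert_of_notMem hmerged hfin.sdiff,
    clusterCount, ← Set.ncard_sdiff_add_ncard_of_subset hpair hfin,
    Set.ncard_pair (mt cluster_eq_cluster_iff.1 h)]

/-- Opening an edge merges at most one pair of clusters, and none once its endpoints are
connected. -/
lemma clusterCount_update_add_le {ζ ζ' : SIConf} {e : Edge} {S : Set Face} (hS : S.Finite)
    (h₁ : (ep e).1 ∈ S) (h₂ : (ep e).2 ∈ S) (hle : ζ ≤ ζ') :
    clusterCount S (update ζ e true) + clusterCount S ζ' ≤
      clusterCount S ζ + clusterCount S (update ζ' e true) := by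
  by_cases h : ConnectedIn ζ (ep e).1 (ep e).2
  · rw [clusterCount_update_of_connectedIn h₁ h,
      clusterCount_update_of_connectedIn h₁ (h.mono hle)]
  · have hζ := clusterCount_update_add_one hS h₁ h₂ h
    by_cases h' : ConnectedIn ζ' (ep e).1 (ep e).2
    · rw [clusterCount_update_of_connectedIn h₁ h']
      omega
    · have hζ' := clusterCount_update_add_one hS h₁ h₂ h'
      omega

theorem clusterCount_add_le_inf_add_sup {S : Set Face} (hS : S.Finite) (A : Finset Edge)
    (hA : ∀ e ∈ A, (ep e).1 ∈ S ∧ (ep e).2 ∈ S) {η ξ : SIConf} (hηξ : ∀ e ∉ A, η e ≤ ξ e) :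
    clusterCount S η + clusterCount S ξ ≤ clusterCount S (η ⊓ ξ) + clusterCount S (η ⊔ ξ) := by
  classical
  induction A using Finset.induction_on generalizing η with
  | empty =>
    have hle : η ≤ ξ := fun e => hηξ e (Finset.notMem_empty e)
    rw [inf_eq_left.2 hle, sup_eq_right.2 hle]
  | insert a A _ ih =>
    have hA' : ∀ e ∈ A, (ep e).1 ∈ S ∧ (ep e).2 ∈ S := fun e he => hA e (by simp [he])
    by_cases ha : η a ≤ ξ a
    · refine ih hA' fun e he => ?_
      by_cases hea : e = a
      · exact hea ▸ ha
      · exact hηξ e (by simp [hea, he])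
    · -- `η` is `η'` with `a` reopened, which costs at most reopening `a` in `η' ⊔ ξ ≥ η'`
      obtain ⟨hηa, hξa⟩ : η a = true ∧ ξ a = false := by revert ha; cases η a <;> cases ξ a <;> simp
      set η' := update η a false
      have hη : update η' a true = η := by rw [update_idem, ← hηa, update_eq_self]
      have hinf : η' ⊓ ξ = η ⊓ ξ := by
        ext e; by_cases hea : e = a
        · subst hea; simp [η', hξa]
        · simp [η', hea]
      have hsup : update (η' ⊔ ξ) a true = η ⊔ ξ := by
        ext e; by_cases hea : e = a
        · subst hea; simp [hηa]
        · simp [η', hea]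
      have hIH := ih hA' (η := η') fun e he => by
        by_cases hea : e = a
        · subst hea; simp [η']
        · simpa [η', hea] using hηξ e (by simp [hea, he])
      have hinc := clusterCount_update_add_le hS (hA a (by simp)).1 (hA a (by simp)).2
        (le_sup_left : η' ≤ η' ⊔ ξ)
      rw [hη, hsup] at hinc
      rw [hinf] at hIH
      omega

lemma touchesDelta_finite {Δ : Set Edge} (hΔ : Δ.Finite) : {p | TouchesDelta Δ p}.Finite := by
  refine ((hΔ.image fun e => (ep e).1).union (hΔ.image fun e => (ep e).2)).subset ?_
  rintro p ⟨e, he, h | h⟩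
  · exact .inl ⟨e, he, h⟩
  · exact .inr ⟨e, he, h⟩

lemma kDelta_eq_clusterCount (Δ : Set Edge) (ζ : SIConf) :
    kDelta Δ ζ = clusterCount {p | TouchesDelta Δ p} ζ := by
  rw [kDelta, clusterCount]
  congr 1
  ext C
  exact ⟨fun ⟨p, hp, hC⟩ => ⟨p, hp, hC.symm⟩, fun ⟨p, hp, hC⟩ => ⟨p, hp, hC.symm⟩⟩

lemma clusterCount_eq_add {S : Set Face} (hS : S.Finite) (ζ : SIConf) :
    clusterCount S ζ =
      clusterCount (S ∩ {p | EvenFace p}) ζ + clusterCount (S \ {p | EvenFace p}) ζ := by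
  have hdisj : Disjoint (cluster ζ '' (S ∩ {p | EvenFace p}))
      (cluster ζ '' (S \ {p | EvenFace p})) := by
    rw [Set.disjoint_left]
    rintro C ⟨p, ⟨-, hp⟩, rfl⟩ ⟨r, ⟨-, hr⟩, hrp⟩
    exact hr ((cluster_eq_cluster_iff.1 hrp).evenFace_iff.2 hp)
  rw [clusterCount, clusterCount, clusterCount,
    ← Set.ncard_union_eq hdisj ((hS.inter_of_left _).image _) (hS.sdiff.image _),
    ← Set.image_union, Set.inter_union_sdiff]

lemma clusterCount_congr {S : Set Face} {ζ ζ' : SIConf}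
    (h : ∀ p ∈ S, ∀ e, (inL e ↔ EvenFace p) → ζ e = ζ' e) :
    clusterCount S ζ = clusterCount S ζ' := by
  rw [clusterCount, clusterCount, Set.image_congr fun p hp => cluster_congr (h p hp)]

lemma inL_cross_iff (x : Vx) : inL (x, true) ↔ ¬ inL (x, false) := by
  by_cases h : Even (x.1 + x.2) <;> simp [inL, h]

open scoped Classical in
noncomputable def poInf (η ξ : SIConf) : SIConf :=
  fun e => if inL e then η e && ξ e else η e || ξ e

open scoped Classical in
noncomputable def poSup (η ξ : SIConf) : SIConf :=
  fun e => if inL e then η e || ξ e else η e && ξ e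

open scoped Classical in
noncomputable def restrictL (ζ : SIConf) : SIConf := fun e => if inL e then ζ e else false

open scoped Classical in
noncomputable def restrictD (ζ : SIConf) : SIConf := fun e => if inL e then false else ζ e

lemma ep_mem_touchesDelta {Δ : Set Edge} {e : Edge} (he : e ∈ Δ) :
    (ep e).1 ∈ {p | TouchesDelta Δ p} ∧ (ep e).2 ∈ {p | TouchesDelta Δ p} :=
  ⟨⟨e, he, .inl rfl⟩, ⟨e, he, .inr rfl⟩⟩

lemma clusterCount_even_add_le {Δ : Set Edge} (hΔ : Δ.Finite) {η ξ : SIConf}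
    (hηξ : ∀ e ∉ Δ, inL e → η e ≤ ξ e) :
    let S := {p | TouchesDelta Δ p} ∩ {p | EvenFace p}
    clusterCount S η + clusterCount S ξ ≤
      clusterCount S (poInf η ξ) + clusterCount S (poSup η ξ) := by
  classical
  intro S
  have hcongr : ∀ ζ ζ', (∀ e, inL e → ζ e = ζ' e) → clusterCount S ζ = clusterCount S ζ' :=
    fun ζ ζ' h => clusterCount_congr fun p hp e he => h e (he.2 hp.2)
  rw [hcongr η (restrictL η) (by simp +contextual [restrictL]),
    hcongr ξ (restrictL ξ) (by simp +contextual [restrictL]),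
    hcongr (poInf η ξ) (restrictL η ⊓ restrictL ξ) (by simp +contextual [restrictL, poInf]),
    hcongr (poSup η ξ) (restrictL η ⊔ restrictL ξ) (by simp +contextual [restrictL, poSup])]
  refine clusterCount_add_le_inf_add_sup ((touchesDelta_finite hΔ).inter_of_left _)
    (hΔ.toFinset.filter inL) (fun e he => ?_) (fun e he => ?_) <;>
    simp only [Finset.mem_filter, hΔ.mem_toFinset] at he
  · exact ⟨⟨(ep_mem_touchesDelta he.1).1, (inL_iff_evenFace_fst e).1 he.2⟩,
      ⟨(ep_mem_touchesDelta he.1).2, (inL_iff_evenFace_snd e).1 he.2⟩⟩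
  · by_cases hL : inL e
    · simpa [restrictL, hL] using hηξ e (fun h => he ⟨h, hL⟩) hL
    · simp [restrictL, hL]

lemma clusterCount_odd_add_le {Δ : Set Edge} (hΔ : Δ.Finite) {η ξ : SIConf}
    (hηξ : ∀ e ∉ Δ, ¬ inL e → ξ e ≤ η e) :
    let S := {p | TouchesDelta Δ p} \ {p | EvenFace p}
    clusterCount S η + clusterCount S ξ ≤
      clusterCount S (poInf η ξ) + clusterCount S (poSup η ξ) := by
  classical
  intro S
  have hcongr : ∀ ζ ζ', (∀ e, ¬ inL e → ζ e = ζ' e) → clusterCount S ζ = clusterCount S ζ' :=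
    fun ζ ζ' h => clusterCount_congr fun p hp e he => h e fun hL => hp.2 (he.1 hL)
  rw [hcongr η (restrictD η) (by simp +contextual [restrictD]),
    hcongr ξ (restrictD ξ) (by simp +contextual [restrictD]),
    hcongr (poInf η ξ) (restrictD ξ ⊔ restrictD η)
      (by simp +contextual [restrictD, poInf, Bool.or_comm]),
    hcongr (poSup η ξ) (restrictD ξ ⊓ restrictD η)
      (by simp +contextual [restrictD, poSup, Bool.and_comm]),
    add_comm (clusterCount _ (restrictD η)), add_comm (clusterCount _ (restrictD ξ ⊔ _))]
  refine clusterCount_add_le_inf_add_sup (touchesDelta_finite hΔ).sdiff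
    (hΔ.toFinset.filter (¬ inL ·)) (fun e he => ?_) (fun e he => ?_) <;>
    simp only [Finset.mem_filter, hΔ.mem_toFinset] at he
  · exact ⟨⟨(ep_mem_touchesDelta he.1).1, mt (inL_iff_evenFace_fst e).2 he.2⟩,
      ⟨(ep_mem_touchesDelta he.1).2, mt (inL_iff_evenFace_snd e).2 he.2⟩⟩
  · by_cases hL : inL e
    · simp [restrictD, hL]
    · simpa [restrictD, hL] using hηξ e (fun h => he ⟨h, hL⟩) hL

/-- `k_Δ` splits into an `𝕃`-part, supermodular in the pointwise order, and an `𝕃*`-part,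
supermodular in the reverse one. -/
theorem kDelta_add_le_poInf_add_poSup {Δ : Set Edge} (hΔ : Δ.Finite) {η ξ : SIConf}
    (hηξ : ∀ e ∉ Δ, (inL e → η e ≤ ξ e) ∧ (¬ inL e → ξ e ≤ η e)) :
    kDelta Δ η + kDelta Δ ξ ≤ kDelta Δ (poInf η ξ) + kDelta Δ (poSup η ξ) := by
  have heven := clusterCount_even_add_le hΔ fun e he => (hηξ e he).1
  have hodd := clusterCount_odd_add_le hΔ fun e he => (hηξ e he).2
  simp only [kDelta_eq_clusterCount, clusterCount_eq_add (touchesDelta_finite hΔ)] at *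
  omega

lemma NoClosedCross.poInf {η ξ : SIConf} (hη : NoClosedCross η) (hξ : NoClosedCross ξ) :
    NoClosedCross (poInf η ξ) := by
  intro x
  have hηx := hη x
  have hξx := hξ x
  by_cases hL : inL (x, false) <;> simp [SixVertex.poInf, hL, inL_cross_iff] <;> tauto

lemma NoClosedCross.poSup {η ξ : SIConf} (hη : NoClosedCross η) (hξ : NoClosedCross ξ) :
    NoClosedCross (poSup η ξ) := by
  intro x
  have hηx := hη x
  have hξx := hξ x
  by_cases hL : inL (x, false) <;> simp [SixVertex.poSup, hL, inL_cross_iff] <;> tauto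

instance (η : SIConf) : DecidablePred (OpenCross η) := fun _ => inferInstanceAs (Decidable (_ ∧ _))

/-- Crosses are counted modularly because each of them has exactly one edge in `𝕃`. -/
lemma openCross_poInf_add_poSup {η ξ : SIConf} (hη : NoClosedCross η) (hξ : NoClosedCross ξ)
    (x : Vx) :
    (if OpenCross (poInf η ξ) x then 1 else 0) + (if OpenCross (poSup η ξ) x then 1 else 0) =
      (if OpenCross η x then 1 else 0) + (if OpenCross ξ x then 1 else 0 : ℕ) := by
  have hcross := inL_cross_iff x
  have h₁ := hη x
  have h₂ := hξ x
  rcases Bool.eq_false_or_eq_true (η (x, false)) with h₃ | h₃ <;>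
    rcases Bool.eq_false_or_eq_true (η (x, true)) with h₄ | h₄ <;>
    rcases Bool.eq_false_or_eq_true (ξ (x, false)) with h₅ | h₅ <;>
    rcases Bool.eq_false_or_eq_true (ξ (x, true)) with h₆ | h₆ <;>
    by_cases hL : inL (x, false) <;>
    simp [OpenCross, poInf, poSup, hL, hcross, h₃, h₄, h₅, h₆] at h₁ h₂ ⊢

lemma NDelta_eq_sum {Δ : Set Edge} (hΔ : Δ.Finite) (η : SIConf) :
    NDelta Δ η = ∑ x ∈ (hΔ.image Prod.fst).toFinset, if OpenCross η x then 1 else 0 := by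
  rw [← Finset.card_filter, NDelta, ← Set.ncard_coe_finset]
  congr 1
  ext x
  simp only [Set.mem_ofPred_eq, Finset.coe_filter, Set.Finite.mem_toFinset, Set.mem_image]
  constructor
  · rintro ⟨hx, h | h⟩
    · exact ⟨⟨_, h, rfl⟩, hx⟩
    · exact ⟨⟨_, h, rfl⟩, hx⟩
  · rintro ⟨⟨⟨y, b⟩, h, rfl⟩, hx⟩
    cases b
    · exact ⟨hx, .inl h⟩
    · exact ⟨hx, .inr h⟩

theorem NDelta_poInf_add_poSup {Δ : Set Edge} (hΔ : Δ.Finite) {η ξ : SIConf}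
    (hη : NoClosedCross η) (hξ : NoClosedCross ξ) :
    NDelta Δ (poInf η ξ) + NDelta Δ (poSup η ξ) = NDelta Δ η + NDelta Δ ξ := by
  simp only [NDelta_eq_sum hΔ, ← Finset.sum_add_distrib, openCross_poInf_add_poSup hη hξ]

noncomputable def realWeight (Δ : Set Edge) (α q : ℝ) (η : SIConf) : ℝ :=
  α ^ NDelta Δ η * q ^ kDelta Δ η

theorem realWeight_mul_le {Δ : Set Edge} (hΔ : Δ.Finite) {α q : ℝ} (hα : 0 ≤ α) (hq : 1 ≤ q)
    {η ξ : SIConf} (hη : NoClosedCross η) (hξ : NoClosedCross ξ)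
    (hηξ : ∀ e ∉ Δ, (inL e → η e ≤ ξ e) ∧ (¬ inL e → ξ e ≤ η e)) :
    realWeight Δ α q η * realWeight Δ α q ξ ≤
      realWeight Δ α q (poInf η ξ) * realWeight Δ α q (poSup η ξ) := by
  calc realWeight Δ α q η * realWeight Δ α q ξ
      = α ^ (NDelta Δ η + NDelta Δ ξ) * q ^ (kDelta Δ η + kDelta Δ ξ) := by
        rw [realWeight, realWeight, pow_add, pow_add]; ring
    _ ≤ α ^ (NDelta Δ η + NDelta Δ ξ) * q ^ (kDelta Δ (poInf η ξ) + kDelta Δ (poSup η ξ)) :=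
        mul_le_mul_of_nonneg_left
          (pow_le_pow_right₀ hq (kDelta_add_le_poInf_add_poSup hΔ hηξ)) (pow_nonneg hα _)
    _ = realWeight Δ α q (poInf η ξ) * realWeight Δ α q (poSup η ξ) := by
        rw [← NDelta_poInf_add_poSup hΔ hη hξ, realWeight, realWeight, pow_add, pow_add]; ring

lemma realWeight_nonneg (Δ : Set Edge) {α q : ℝ} (hα : 0 ≤ α) (hq : 0 ≤ q) (η : SIConf) :
    0 ≤ realWeight Δ α q η :=
  mul_nonneg (pow_nonneg hα _) (pow_nonneg hq _)

lemma realWeight_pos (Δ : Set Edge) {α q : ℝ} (hα : 0 < α) (hq : 0 < q) (η : SIConf) :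
    0 < realWeight Δ α q η :=
  mul_pos (pow_pos hα _) (pow_pos hq _)

lemma SIweight_ne_top (Δ : Set Edge) (α q : ℝ) (η : SIConf) : SIweight Δ α q η ≠ ⊤ :=
  ENNReal.ofReal_ne_top

lemma toReal_SIweight (Δ : Set Edge) {α q : ℝ} (hα : 0 ≤ α) (hq : 0 ≤ q) (η : SIConf) :
    (SIweight Δ α q η).toReal = realWeight Δ α q η :=
  ENNReal.toReal_ofReal (realWeight_nonneg Δ hα hq η)

section Encoding

variable {Δ : Set Edge}

open scoped Classical in
/-- Configurations agreeing with `τ` off `Δ`, coded by their values on `Δ` with the bits of the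
`𝕃*`-edges flipped, so that the pointwise order of codes is `⪯`. -/
noncomputable def encode (Δ : Set Edge) (τ : SIConf) (g : Δ → Bool) : SIConf :=
  fun e => if h : e ∈ Δ then (if inL e then g ⟨e, h⟩ else !g ⟨e, h⟩) else τ e

open scoped Classical in
noncomputable def decode (Δ : Set Edge) (η : SIConf) : Δ → Bool :=
  fun e => if inL e then η e else !η e

lemma encode_of_notMem (τ : SIConf) (g : Δ → Bool) {e : Edge} (he : e ∉ Δ) :
    encode Δ τ g e = τ e := by
  simp [encode, he]

lemma encode_decode {τ η : SIConf} (h : ∀ e ∉ Δ, η e = τ e) : encode Δ τ (decode Δ η) = η := by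
  ext e
  by_cases he : e ∈ Δ
  · by_cases hL : inL e <;> simp [encode, decode, he, hL]
  · simp [encode, he, h e he]

lemma decode_encode (τ : SIConf) (g : Δ → Bool) : decode Δ (encode Δ τ g) = g := by
  ext ⟨e, he⟩
  by_cases hL : inL e <;> simp [encode, decode, he, hL]

lemma po_encode_of_le (τ : SIConf) {g g' : Δ → Bool} (h : g ≤ g') :
    PO (encode Δ τ g) (encode Δ τ g') := by
  intro e
  by_cases he : e ∈ Δ
  · have := h ⟨e, he⟩
    constructor <;> intro hL <;> simp only [encode, he, hL, dite_true, if_true, if_false]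
    · exact this
    · revert this; cases g ⟨e, he⟩ <;> cases g' ⟨e, he⟩ <;> simp
  · simp [encode, he]

lemma po_encode {τ τ' : SIConf} (hττ' : PO τ τ') (g : Δ → Bool) :
    PO (encode Δ τ g) (encode Δ τ' g) := by
  intro e
  by_cases he : e ∈ Δ
  · simp [encode, he]
  · simpa [encode, he] using hττ' e

lemma encode_inf {τ τ' : SIConf} (hττ' : PO τ τ') (g g' : Δ → Bool) :
    encode Δ τ (g ⊓ g') = poInf (encode Δ τ g) (encode Δ τ' g') := by
  ext e
  by_cases he : e ∈ Δ
  · by_cases hL : inL e <;> simp [encode, poInf, he, hL]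
  · have := hττ' e
    by_cases hL : inL e <;> simp only [encode, poInf, he, hL, dite_false, if_true, if_false] <;>
      revert this <;> cases τ e <;> cases τ' e <;> simp [hL]

lemma encode_sup {τ τ' : SIConf} (hττ' : PO τ τ') (g g' : Δ → Bool) :
    encode Δ τ' (g ⊔ g') = poSup (encode Δ τ g) (encode Δ τ' g') := by
  ext e
  by_cases he : e ∈ Δ
  · by_cases hL : inL e <;> simp [encode, poSup, he, hL]
  · have := hττ' e
    by_cases hL : inL e <;> simp only [encode, poSup, he, hL, dite_false, if_true, if_false] <;>
      revert this <;> cases τ e <;> cases τ' e <;> simp [hL]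

noncomputable def siokEquivCodes (Δ : Set Edge) (τ : SIConf) :
    {η // SIok Δ τ η} ≃ {g : Δ → Bool // NoClosedCross (encode Δ τ g)} where
  toFun η := ⟨decode Δ η.1, (encode_decode η.2.2).symm ▸ η.2.1⟩
  invFun g := ⟨encode Δ τ g.1, g.2, fun _ => encode_of_notMem τ g.1⟩
  left_inv η := Subtype.ext (encode_decode η.2.2)
  right_inv g := Subtype.ext (decode_encode τ g.1)

open scoped Classical in
lemma sum_SIok [Fintype Δ] (τ : SIConf) [Fintype {η // SIok Δ τ η}] (φ : SIConf → ℝ) :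
    ∑ η : {η // SIok Δ τ η}, φ η =
      ∑ g : Δ → Bool, if NoClosedCross (encode Δ τ g) then φ (encode Δ τ g) else 0 := by
  rw [Fintype.sum_equiv (siokEquivCodes Δ τ) _ (fun g => φ (encode Δ τ g.1))
    fun η => congrArg φ (encode_decode η.2.2).symm, ← Finset.sum_filter]
  exact (Finset.sum_subtype (p := fun g => NoClosedCross (encode Δ τ g))
    (Finset.univ.filter fun g => NoClosedCross (encode Δ τ g)) (fun g => by simp)
    fun g => φ (encode Δ τ g)).symm

open scoped Classical in
noncomputable def codeWeight (Δ : Set Edge) (α q : ℝ) (τ : SIConf) (g : Δ → Bool) : ℝ :=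
  if NoClosedCross (encode Δ τ g) then realWeight Δ α q (encode Δ τ g) else 0

lemma codeWeight_nonneg {α q : ℝ} (hα : 0 ≤ α) (hq : 0 ≤ q) (τ : SIConf) (g : Δ → Bool) :
    0 ≤ codeWeight Δ α q τ g := by
  unfold codeWeight
  split_ifs
  exacts [realWeight_nonneg Δ hα hq _, le_rfl]

lemma sum_codeWeight_pos [Fintype Δ] {α q : ℝ} (hα : 0 < α) (hq : 0 < q) {τ : SIConf}
    (hτ : NoClosedCross τ) : 0 < ∑ g, codeWeight Δ α q τ g := by
  have hτcode : encode Δ τ (decode Δ τ) = τ := encode_decode fun _ _ => rfl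
  refine Finset.sum_pos' (fun g _ => codeWeight_nonneg hα.le hq.le τ g)
    ⟨decode Δ τ, Finset.mem_univ _, ?_⟩
  rw [codeWeight, hτcode, if_pos hτ]
  exact realWeight_pos Δ hα hq τ

lemma codeWeight_mul_le (hΔ : Δ.Finite) {α q : ℝ} (hα : 0 ≤ α) (hq : 1 ≤ q) {τ τ' : SIConf}
    (hττ' : PO τ τ') (g g' : Δ → Bool) :
    codeWeight Δ α q τ g * codeWeight Δ α q τ' g' ≤
      codeWeight Δ α q τ (g ⊓ g') * codeWeight Δ α q τ' (g ⊔ g') := by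
  have hnn := codeWeight_nonneg (Δ := Δ) hα (zero_le_one.trans hq)
  by_cases hη : NoClosedCross (encode Δ τ g)
  · by_cases hξ : NoClosedCross (encode Δ τ' g')
    · rw [codeWeight, codeWeight, codeWeight, codeWeight, encode_inf hττ', encode_sup hττ',
        if_pos hη, if_pos hξ, if_pos (hη.poInf hξ), if_pos (hη.poSup hξ)]
      refine realWeight_mul_le hΔ hα hq hη hξ fun e he => ?_
      simpa only [encode_of_notMem _ _ he] using hττ' e
    · rw [show codeWeight Δ α q τ' g' = 0 from if_neg hξ, mul_zero]
      exact mul_nonneg (hnn _ _) (hnn _ _)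
  · rw [show codeWeight Δ α q τ g = 0 from if_neg hη, zero_mul]
    exact mul_nonneg (hnn _ _) (hnn _ _)

theorem integral_SIfin [Fintype Δ] {α q : ℝ} (hα : 0 ≤ α) (hq : 0 ≤ q) (τ : SIConf)
    (f : SIConf → ℝ) :
    ∫ η, f η ∂(SIfin Δ α q τ) =
      (∑ g, f (encode Δ τ g) * codeWeight Δ α q τ g) / ∑ g, codeWeight Δ α q τ g := by
  classical
  have : Fintype {η // SIok Δ τ η} := Fintype.ofEquiv _ (siokEquivCodes Δ τ).symm
  have hdirac := integral_sum_smul_dirac (fun η : {η // SIok Δ τ η} => SIweight Δ α q η.1)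
    (fun η => SIweight_ne_top Δ α q η.1) Subtype.val f
  rw [SIfin, integral_smul_measure, hdirac, tsum_fintype,
    ENNReal.toReal_inv, ENNReal.toReal_sum fun η _ => SIweight_ne_top Δ α q η.1,
    smul_eq_mul, inv_mul_eq_div, sum_SIok τ (fun η => (SIweight Δ α q η).toReal * f η),
    sum_SIok τ (fun η => (SIweight Δ α q η).toReal)]
  congr 1 <;> refine Fintype.sum_congr _ _ fun g => ?_ <;> unfold codeWeight <;> split_ifs <;>
    simp [toReal_SIweight Δ hα hq, mul_comm]

end Encoding

theorem stmt_8_general (q α : ℝ) (hq : 1 ≤ q) (hα : 0 < α) (Δ : Set Edge) (hΔ : Δ.Finite)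
    (τ τ' : SIConf) (hτ : NoClosedCross τ) (hτ' : NoClosedCross τ') (hττ' : PO τ τ')
    (f : SIConf → ℝ) (hfmono : ∀ η ξ : SIConf, PO η ξ → f η ≤ f ξ) :
    ∫ η, f η ∂(SIfin Δ α q τ) ≤ ∫ η, f η ∂(SIfin Δ α q τ') := by
  have := hΔ.fintype
  have hq₀ : 0 < q := zero_lt_one.trans_le hq
  have hnn := codeWeight_nonneg (Δ := Δ) hα.le hq₀.le
  rw [integral_SIfin hα.le hq₀.le, integral_SIfin hα.le hq₀.le]
  calc (∑ g, f (encode Δ τ g) * codeWeight Δ α q τ g) / ∑ g, codeWeight Δ α q τ g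
      ≤ (∑ g, f (encode Δ τ g) * codeWeight Δ α q τ' g) / ∑ g, codeWeight Δ α q τ' g :=
        holley_div (hnn τ) (hnn τ') (sum_codeWeight_pos hα hq₀ hτ) (sum_codeWeight_pos hα hq₀ hτ')
          (fun _ _ h => hfmono _ _ (po_encode_of_le τ h)) (codeWeight_mul_le hΔ hα.le hq hττ')
    _ ≤ (∑ g, f (encode Δ τ' g) * codeWeight Δ α q τ' g) / ∑ g, codeWeight Δ α q τ' g :=
        div_le_div_of_nonneg_right (Finset.sum_le_sum fun g _ =>
          mul_le_mul_of_nonneg_right (hfmono _ _ (po_encode hττ' g)) (hnn τ' g))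
          (Finset.sum_nonneg fun g _ => hnn τ' g)

/-- Fix `q ≥ 1` and `α > 0`.  Let `Δ ⊆ E(𝕃) ∪ E(𝕃*)` be finite and let `τ ⪯ τ'` be two boundary
conditions in `Ω^SI`.  Then `P^{SI,τ'}_{Δ,α,q}` stochastically dominates `P^{SI,τ}_{Δ,α,q}`
with respect to `⪯`: for every bounded measurable `⪯`-increasing function `f`,
`∫ f dP^{SI,τ}_{Δ,α,q} ≤ ∫ f dP^{SI,τ'}_{Δ,α,q}`. -/
theorem stmt_8 (q α : ℝ) (hq : 1 ≤ q) (hα : 0 < α) (Δ : Set Edge) (hΔ : Δ.Finite)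
    (τ τ' : SIConf) (hτ : NoClosedCross τ) (hτ' : NoClosedCross τ') (hττ' : PO τ τ')
    (f : SIConf → ℝ) (hfm : Measurable f) (hfb : ∃ M, ∀ η, |f η| ≤ M)
    (hfmono : ∀ η ξ : SIConf, PO η ξ → f η ≤ f ξ) :
    ∫ η, f η ∂(SIfin Δ α q τ) ≤ ∫ η, f η ∂(SIfin Δ α q τ') :=
  stmt_8_general q α hq hα Δ hΔ τ τ' hτ hτ' hττ' f hfmono

end SixVertex
end

section
/- If h and h' are two height functions whose spin projections coincide, then h' − h is a constant function whose value is an integer multiple of 4. -/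
/-!
We identify the set `(ℤ²)* = ℤ² + (1/2, 1/2)` of faces of `ℤ²` with `ℤ × ℤ`
(the face `p` corresponding to the point `p + (1/2, 1/2)`).  The even sublattice `𝕃`
consists of the faces `p` with `p.1 + p.2` even.
-/

/-- Adjacency of faces of `ℤ²` (i.e. adjacency in `(ℤ²)*`): `ℓ¹`-distance one. -/
def FaceAdj (u v : ℤ × ℤ) : Prop := (u.1 - v.1).natAbs + (u.2 - v.2).natAbs = 1

/-- A height function: `|h u - h v| = 1` for adjacent faces `u, v`, and `h` is even on the
even sublattice `𝕃`. -/
def IsHeightFunction (h : ℤ × ℤ → ℤ) : Prop :=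
  (∀ u v, FaceAdj u v → (h u - h v).natAbs = 1) ∧ (∀ u, Even (u.1 + u.2) → Even (h u))

/-- The spin projection of a height function: spin `+` (here `true`) iff the height is
`0` or `1` mod `4`, spin `-` (here `false`) iff the height is `2` or `3` mod `4`. -/
def spinProj (h : ℤ × ℤ → ℤ) (v : ℤ × ℤ) : Bool := decide (h v % 4 = 0 ∨ h v % 4 = 1)

/-!
Both heights have the parity of `v.1 + v.2`, so within a fixed parity class the spin
`h v mod 4 ∈ {0, 1}` or `{2, 3}` determines `h v mod 4`; hence equal spins give
`h' ≡ h (mod 4)` pointwise. Along an edge both heights move by `±1`, so `h' - h` changes by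
an element of `{-2, 0, 2}` that is divisible by `4`, i.e. not at all. Since `(ℤ²)*` is
connected, `h' - h` is constant.
-/

lemma faceAdj_succ_fst (x y : ℤ) : FaceAdj (x + 1, y) (x, y) := by
  simp [FaceAdj]

lemma faceAdj_succ_snd (x y : ℤ) : FaceAdj (x, y + 1) (x, y) := by
  simp [FaceAdj]

lemma eq_of_faceAdj_invariant {α : Type*} (f : ℤ × ℤ → α)
    (hf : ∀ u v, FaceAdj u v → f u = f v) (v : ℤ × ℤ) : f v = f (0, 0) := by
  have periodic_fst (y : ℤ) : Function.Periodic (fun x => f (x, y)) 1 :=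
    fun x => hf _ _ (faceAdj_succ_fst x y)
  have periodic_snd : Function.Periodic (fun y => f (0, y)) 1 :=
    fun y => hf _ _ (faceAdj_succ_snd 0 y)
  obtain ⟨x, y⟩ := v
  calc f (x, y) = f (0, y) := by simpa using (periodic_fst y).int_mul_eq x
    _ = f (0, 0) := by simpa using periodic_snd.int_mul_eq y

namespace IsHeightFunction

variable {h h' : ℤ × ℤ → ℤ}

lemma emod_two_eq (hh : IsHeightFunction h) (v : ℤ × ℤ) : h v % 2 = (v.1 + v.2) % 2 := by
  obtain ⟨x, y⟩ := v
  rcases Int.even_or_odd (x + y) with heven | hodd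
  · have := hh.2 (x, y) heven
    rw [Int.even_iff] at heven this
    omega
  · -- `(x, y)` is odd, so its neighbour `(x + 1, y)` lies in `𝕃`.
    have hstep := hh.1 _ _ (faceAdj_succ_fst x y)
    have heven : Even (h (x + 1, y)) := hh.2 _ (by rw [add_right_comm]; exact hodd.add_one)
    rw [Int.even_iff] at heven
    rw [Int.odd_iff] at hodd
    omega

lemma four_dvd_sub_of_spinProj_eq (hh : IsHeightFunction h) (hh' : IsHeightFunction h')
    {v : ℤ × ℤ} (hv : spinProj h v = spinProj h' v) : (4 : ℤ) ∣ h' v - h v := by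
  simp only [spinProj, decide_eq_decide] at hv
  have := hh.emod_two_eq v
  have := hh'.emod_two_eq v
  omega

lemma sub_eq_of_faceAdj (hh : IsHeightFunction h) (hh' : IsHeightFunction h')
    (hspin : spinProj h = spinProj h') {u v : ℤ × ℤ} (huv : FaceAdj u v) :
    h' u - h u = h' v - h v := by
  have := hh.1 u v huv
  have := hh'.1 u v huv
  have := hh.four_dvd_sub_of_spinProj_eq hh' (congrFun hspin u)
  have := hh.four_dvd_sub_of_spinProj_eq hh' (congrFun hspin v)
  omega

end IsHeightFunction

/-- If `h` and `h'` are two height functions whose spin projections coincide, then `h' - h`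
is a constant function whose value is an integer multiple of `4`. -/
theorem stmt_9 (h h' : ℤ × ℤ → ℤ)
    (hh : IsHeightFunction h) (hh' : IsHeightFunction h')
    (hspin : spinProj h = spinProj h') :
    ∃ k : ℤ, ∀ v, h' v - h v = 4 * k := by
  obtain ⟨k, hk⟩ := hh.four_dvd_sub_of_spinProj_eq hh' (congrFun hspin (0, 0))
  refine ⟨k, fun v => ?_⟩
  rw [← hk]
  exact eq_of_faceAdj_invariant (fun v => h' v - h v)
    (fun _ _ huv => hh.sub_eq_of_faceAdj hh' hspin huv) v
end

section
/- Let Λ be a diamond domain, Δ = Δ(Λ), α > 0 and i, j ∈ {+,−}. For every spin configuration σ ∈ Ω^{spin,ij}_Λ, the sum of α^{N_Δ(η)} over all superimposed configurations η ∈ Ω^{SI,11}_Δ compatible with σ equals (2+α)^{#saddle_Λ(σ)}. -/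
open MeasureTheory Filter Topology
open scoped ENNReal

namespace SixVertex


section Aux

open Finset

/-- The set of vertices whose cross lies in `Δ(Λ)`. -/
def Xset (v : Face) (n : ℕ) : Set Vx :=
  {x | (ep (LEdgeAt x)).1 ∈ diamond v n ∧ (ep (LEdgeAt x)).2 ∈ diamond v n}

lemma mem_delta_iff (v : Face) (n : ℕ) (e : Edge) :
    e ∈ deltaOf v n ↔ e.1 ∈ Xset v n := Iff.rfl

lemma ep_false (x : Vx) : ep (x, false) = (x - (1, 1), x) := rfl
lemma ep_true (x : Vx) : ep (x, true) = (x - (1, 0), x - (0, 1)) := rfl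

lemma mem_Xset_iff (v : Face) (n : ℕ) (x : Vx) :
    x ∈ Xset v n ↔
      (if Even (x.1 + x.2)
        then (x.1 - 1 - v.1).natAbs + (x.2 - 1 - v.2).natAbs ≤ n ∧
             (x.1 - v.1).natAbs + (x.2 - v.2).natAbs ≤ n
        else (x.1 - 1 - v.1).natAbs + (x.2 - v.2).natAbs ≤ n ∧
             (x.1 - v.1).natAbs + (x.2 - 1 - v.2).natAbs ≤ n) := by
  by_cases h : Even (x.1 + x.2) <;>
    simp [Xset, LEdgeAt, ep, diamond, fdist, h, Prod.fst_sub, Prod.snd_sub]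

lemma hatVert_iff (v : Face) (n : ℕ) (a b : ℤ) :
    HatVert v n (a, b) ↔
      ((a - v.1).natAbs + (b - v.2).natAbs ≤ n ∨
       (a - 1 - v.1).natAbs + (b - v.2).natAbs ≤ n ∨
       (a - v.1).natAbs + (b - 1 - v.2).natAbs ≤ n ∨
       (a - 1 - v.1).natAbs + (b - 1 - v.2).natAbs ≤ n) := by
  constructor
  · rintro ⟨p, hp, c, hc, d, hd, rfl⟩
    simp only [Set.mem_insert_iff, Set.mem_singleton_iff] at hc hd
    simp only [diamond, fdist, Set.mem_setOf_eq, Prod.fst_sub, Prod.snd_sub] at hp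
    rcases hc with rfl | rfl <;> rcases hd with rfl | rfl <;> simp_all
  · intro h
    rcases h with h | h | h | h
    · exact ⟨(a, b) - (0, 0), by simpa [diamond, fdist] using h,
        0, by simp, 0, by simp, rfl⟩
    · exact ⟨(a, b) - (1, 0), by simpa [diamond, fdist] using h,
        1, by simp, 0, by simp, rfl⟩
    · exact ⟨(a, b) - (0, 1), by simpa [diamond, fdist] using h,
        0, by simp, 1, by simp, rfl⟩
    · exact ⟨(a, b) - (1, 1), by simpa [diamond, fdist] using h,
        1, by simp, 1, by simp, rfl⟩

set_option maxHeartbeats 1600000 in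
lemma internal_iff (v : Face) (n : ℕ) (hv : Even (v.1 + v.2)) (hn0 : 0 < n)
    (hn : Even n) (x : Vx) : InternalVert v n x ↔ x ∈ Xset v n := by
  obtain ⟨x1, x2⟩ := x
  have hv' : (v.1 + v.2) % 2 = 0 := Int.even_iff.mp hv
  have hn' : n % 2 = 0 := Nat.even_iff.mp hn
  rw [mem_Xset_iff]
  simp only [Int.even_iff]
  constructor
  · rintro ⟨h0, hadj⟩
    rw [hatVert_iff] at h0
    have h1 := (hatVert_iff v n (x1 + 1) x2).mp (hadj (x1 + 1, x2) (by
      show ((x1 - (x1+1)).natAbs + (x2 - x2).natAbs) = 1; omega))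
    have h2 := (hatVert_iff v n (x1 - 1) x2).mp (hadj (x1 - 1, x2) (by
      show ((x1 - (x1-1)).natAbs + (x2 - x2).natAbs) = 1; omega))
    have h3 := (hatVert_iff v n x1 (x2 + 1)).mp (hadj (x1, x2 + 1) (by
      show ((x1 - x1).natAbs + (x2 - (x2+1)).natAbs) = 1; omega))
    have h4 := (hatVert_iff v n x1 (x2 - 1)).mp (hadj (x1, x2 - 1) (by
      show ((x1 - x1).natAbs + (x2 - (x2-1)).natAbs) = 1; omega))
    split_ifs with hpar <;> omega
  · intro hx
    constructor
    · rw [hatVert_iff]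
      split_ifs at hx <;> omega
    · rintro ⟨y1, y2⟩ hy
      have hy' : (x1 - y1).natAbs + (x2 - y2).natAbs = 1 := hy
      have hcases : (y1 = x1 + 1 ∧ y2 = x2) ∨ (y1 = x1 - 1 ∧ y2 = x2) ∨
          (y1 = x1 ∧ y2 = x2 + 1) ∨ (y1 = x1 ∧ y2 = x2 - 1) := by omega
      rw [hatVert_iff]
      clear hy hy'
      split_ifs at hx <;>
        rcases hcases with ⟨rfl, rfl⟩ | ⟨rfl, rfl⟩ | ⟨rfl, rfl⟩ | ⟨rfl, rfl⟩ <;> omega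

lemma Xset_finite (v : Face) (n : ℕ) : (Xset v n).Finite := by
  apply Set.Finite.subset
    ((Set.finite_Icc (v.1 - (n:ℤ)) (v.1 + n + 1)).prod
      (Set.finite_Icc (v.2 - (n:ℤ)) (v.2 + n + 1)))
  intro x hx
  rw [mem_Xset_iff] at hx
  rw [Set.mem_prod, Set.mem_Icc, Set.mem_Icc]
  split_ifs at hx <;> omega

lemma saddle_of_notMem (v : Face) (n : ℕ) (σ : SpinConf) (i j : Bool)
    (hΛ : IsDiamond v n) (hσ : OmegaSpin v n i j σ) (x : Vx) (hx : x ∉ Xset v n) :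
    Saddle σ x := by
  obtain ⟨hv, hn0, hn⟩ := hΛ
  obtain ⟨x1, x2⟩ := x
  have hv' : (v.1 + v.2) % 2 = 0 := Int.even_iff.mp hv
  have hn' : n % 2 = 0 := Nat.even_iff.mp hn
  rw [mem_Xset_iff] at hx
  have hb := hσ.2
  have h4 : n ≤ (x1 - 1 - v.1).natAbs + (x2 - 1 - v.2).natAbs ∧
      n ≤ (x1 - v.1).natAbs + (x2 - v.2).natAbs ∧
      n ≤ (x1 - 1 - v.1).natAbs + (x2 - v.2).natAbs ∧
      n ≤ (x1 - v.1).natAbs + (x2 - 1 - v.2).natAbs := by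
    by_cases hpar : Even (x1 + x2)
    · rw [if_pos hpar] at hx
      have hp' := Int.even_iff.mp hpar
      omega
    · rw [if_neg hpar] at hx
      have hp' := Int.not_even_iff.mp hpar
      omega
  have e11 : σ ((x1, x2) - (1, 1)) = (if Even ((x1 - 1) + (x2 - 1)) then j else i) := by
    have := hb ((x1 - 1, x2 - 1) : Face) h4.1
    simpa using this
  have e00 : σ ((x1, x2) : Face) = (if Even (x1 + x2) then j else i) := by
    have := hb ((x1, x2) : Face) h4.2.1
    simpa using this
  have e10 : σ ((x1, x2) - (1, 0)) = (if Even ((x1 - 1) + x2) then j else i) := by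
    have := hb ((x1 - 1, x2) : Face) h4.2.2.1
    simpa using this
  have e01 : σ ((x1, x2) - (0, 1)) = (if Even (x1 + (x2 - 1)) then j else i) := by
    have := hb ((x1, x2 - 1) : Face) h4.2.2.2
    simpa using this
  constructor
  · rw [e11, e00]
    congr 1
    rw [eq_iff_iff, Int.even_iff, Int.even_iff]
    omega
  · rw [e10, e01]
    congr 1
    rw [eq_iff_iff, Int.even_iff, Int.even_iff]
    omega

/-! #### The bijection -/

def stateBit (b : Bool) (s : Fin 3) : Bool :=
  if b then decide (s ≠ 1) else decide (s ≠ 2)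

def forced (σ : SpinConf) (e : Edge) : Bool :=
  if e.2 then decide (σ (e.1 - (1, 0)) = σ (e.1 - (0, 1)))
  else decide (σ (e.1 - (1, 1)) = σ e.1)

lemma forced_false (σ : SpinConf) (x : Vx) :
    forced σ (x, false) = decide (σ (x - (1, 1)) = σ x) := rfl

lemma forced_true (σ : SpinConf) (x : Vx) :
    forced σ (x, true) = decide (σ (x - (1, 0)) = σ (x - (0, 1))) := rfl

def decodeF (F : Finset Vx) (σ : SpinConf) (g : F → Fin 3) : SIConf :=
  fun e => if h : e.1 ∈ F then stateBit e.2 (g ⟨e.1, h⟩) else forced σ e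

def encodeη (η : SIConf) (x : Vx) : Fin 3 :=
  if η (x, false) then (if η (x, true) then 0 else 1) else 2

lemma fin3_eq : ∀ s : Fin 3, s = 0 ∨ s = 1 ∨ s = 2 := by decide

lemma stateBit_or (s : Fin 3) : stateBit false s = true ∨ stateBit true s = true := by
  rcases fin3_eq s with rfl | rfl | rfl <;> simp [stateBit]

lemma stateBit_both (s : Fin 3) :
    (stateBit false s = true ∧ stateBit true s = true) ↔ s = 0 := by
  rcases fin3_eq s with rfl | rfl | rfl <;> simp [stateBit]

lemma compat_false {σ : SpinConf} {η : SIConf} (hc : Compat σ η) (x : Vx)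
    (h : η (x, false) = true) : σ (x - (1, 1)) = σ x := by
  have := hc (x, false) h
  rw [ep_false] at this
  exact this

lemma compat_true {σ : SpinConf} {η : SIConf} (hc : Compat σ η) (x : Vx)
    (h : η (x, true) = true) : σ (x - (1, 0)) = σ (x - (0, 1)) := by
  have := hc (x, true) h
  rw [ep_true] at this
  exact this

lemma decode_SIok {v : Face} {n : ℕ} {σ : SpinConf} (hice : IceRule σ)
    (hsad : ∀ x : Vx, x ∉ Xset v n → Saddle σ x)
    (F : Finset Vx) (hFX : ∀ x, x ∈ F → x ∈ Xset v n) (g : F → Fin 3) :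
    SIok (deltaOf v n) wiredwired (decodeF F σ g) := by
  constructor
  · intro x
    by_cases h : x ∈ F
    · have h0 : decodeF F σ g (x, false) = stateBit false (g ⟨x, h⟩) := dif_pos h
      have h1 : decodeF F σ g (x, true) = stateBit true (g ⟨x, h⟩) := dif_pos h
      rw [h0, h1]
      exact stateBit_or _
    · have h0 : decodeF F σ g (x, false) = forced σ (x, false) := dif_neg h
      have h1 : decodeF F σ g (x, true) = forced σ (x, true) := dif_neg h
      rw [h0, h1, forced_false, forced_true]
      rcases hice x with hi | hi
      · exact Or.inl (decide_eq_true hi)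
      · exact Or.inr (decide_eq_true hi)
  · intro e he
    have hx : e.1 ∉ Xset v n := fun h => he ((mem_delta_iff v n e).mpr h)
    have hFm : e.1 ∉ F := fun h => hx (hFX _ h)
    have hs := hsad e.1 hx
    have h0 : decodeF F σ g e = forced σ e := dif_neg hFm
    obtain ⟨x, b⟩ := e
    rw [h0]
    cases b
    · rw [forced_false]
      exact decide_eq_true hs.1
    · rw [forced_true]
      exact decide_eq_true hs.2

lemma decode_compat {σ : SpinConf} (F : Finset Vx)
    (hsadF : ∀ x ∈ F, Saddle σ x) (g : F → Fin 3) :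
    Compat σ (decodeF F σ g) := by
  rintro ⟨x, b⟩ hb
  by_cases h : x ∈ F
  · have hs := hsadF x h
    cases b
    · rw [ep_false]; exact hs.1
    · rw [ep_true]; exact hs.2
  · have h0 : decodeF F σ g (x, b) = forced σ (x, b) := dif_neg h
    rw [h0] at hb
    cases b
    · rw [ep_false]
      rw [forced_false] at hb
      exact of_decide_eq_true hb
    · rw [ep_true]
      rw [forced_true] at hb
      exact of_decide_eq_true hb

lemma encode_decode_s10 {σ : SpinConf} (F : Finset Vx) (g : F → Fin 3) :
    (fun x : F => encodeη (decodeF F σ g) x.1) = g := by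
  funext x
  obtain ⟨x, hx⟩ := x
  have h0 : decodeF F σ g (x, false) = stateBit false (g ⟨x, hx⟩) := dif_pos hx
  have h1 : decodeF F σ g (x, true) = stateBit true (g ⟨x, hx⟩) := dif_pos hx
  rcases fin3_eq (g ⟨x, hx⟩) with h | h | h <;>
    simp_all [encodeη, stateBit]

lemma decode_encode_s10 {v : Face} {n : ℕ} {σ : SpinConf} (hice : IceRule σ)
    (F : Finset Vx) (hF : ∀ x, x ∈ F ↔ x ∈ Xset v n ∧ Saddle σ x)
    (hsad : ∀ x : Vx, x ∉ Xset v n → Saddle σ x)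
    (η : SIConf) (hη : SIok (deltaOf v n) wiredwired η) (hc : Compat σ η) :
    decodeF F σ (fun x : F => encodeη η x.1) = η := by
  funext e
  obtain ⟨x, b⟩ := e
  by_cases h : x ∈ F
  · have h0 : decodeF F σ (fun x : F => encodeη η x.1) (x, b)
        = stateBit b (encodeη η x) := dif_pos h
    rw [h0]
    have hnc := hη.1 x
    cases hb0 : η (x, false) <;> cases hb1 : η (x, true) <;>
      cases b <;> simp_all [encodeη, stateBit]
  · have h0 : decodeF F σ (fun x : F => encodeη η x.1) (x, b)
        = forced σ (x, b) := dif_neg h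
    rw [h0]
    by_cases hx : (x : Vx) ∈ Xset v n
    · have hns : ¬ Saddle σ x := fun hs => h ((hF x).mpr ⟨hx, hs⟩)
      cases b
      · rw [forced_false]
        by_cases hd : σ ((x : Vx) - (1, 1)) = σ x
        · have hd2 : σ ((x : Vx) - (1, 0)) ≠ σ ((x : Vx) - (0, 1)) :=
            fun h2 => hns ⟨hd, h2⟩
          have ht : η (x, true) = false := by
            cases hcon : η (x, true)
            · rfl
            · exact absurd (compat_true hc x hcon) hd2
          have hf : η (x, false) = true := by
            rcases hη.1 x with h' | h'
            · exact h'
            · rw [ht] at h'; exact absurd h' (by simp)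
          rw [hf]
          exact decide_eq_true hd
        · have hf : η (x, false) = false := by
            cases hcon : η (x, false)
            · rfl
            · exact absurd (compat_false hc x hcon) hd
          rw [hf]
          exact decide_eq_false hd
      · rw [forced_true]
        by_cases hd : σ ((x : Vx) - (1, 0)) = σ ((x : Vx) - (0, 1))
        · have hd2 : σ ((x : Vx) - (1, 1)) ≠ σ x := fun h2 => hns ⟨h2, hd⟩
          have hfal : η (x, false) = false := by
            cases hcon : η (x, false)
            · rfl
            · exact absurd (compat_false hc x hcon) hd2
          have ht : η (x, true) = true := by
            rcases hη.1 x with h' | h'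
            · rw [hfal] at h'; exact absurd h' (by simp)
            · exact h'
          rw [ht]
          exact decide_eq_true hd
        · have ht : η (x, true) = false := by
            cases hcon : η (x, true)
            · rfl
            · exact absurd (compat_true hc x hcon) hd
          rw [ht]
          exact decide_eq_false hd
    · have hs := hsad x hx
      have hb : η (x, b) = true := hη.2 (x, b) (fun hm => hx hm)
      rw [hb]
      cases b
      · rw [forced_false]
        exact decide_eq_true hs.1
      · rw [forced_true]
        exact decide_eq_true hs.2

lemma NDelta_decode {v : Face} {n : ℕ} {σ : SpinConf}
    (F : Finset Vx) (hF : ∀ x, x ∈ F ↔ x ∈ Xset v n ∧ Saddle σ x) (g : F → Fin 3) :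
    NDelta (deltaOf v n) (decodeF F σ g)
      = (univ.filter (fun x : F => g x = 0)).card := by
  classical
  have hset : {x : Vx | OpenCross (decodeF F σ g) x ∧
        ((x, false) ∈ deltaOf v n ∨ (x, true) ∈ deltaOf v n)}
      = ↑((univ.filter (fun x : F => g x = 0)).image Subtype.val) := by
    ext x
    simp only [Set.mem_setOf_eq, coe_image, Set.mem_image, mem_coe, mem_filter,
      mem_univ, true_and]
    constructor
    · rintro ⟨hoc, hd⟩
      have hx : x ∈ Xset v n := by
        rcases hd with h | h
        · exact (mem_delta_iff v n (x, false)).mp h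
        · exact (mem_delta_iff v n (x, true)).mp h
      by_cases h : x ∈ F
      · have h0 : decodeF F σ g (x, false) = stateBit false (g ⟨x, h⟩) := dif_pos h
        have h1 : decodeF F σ g (x, true) = stateBit true (g ⟨x, h⟩) := dif_pos h
        refine ⟨⟨x, h⟩, ?_, rfl⟩
        exact (stateBit_both _).mp ⟨by rw [← h0]; exact hoc.1, by rw [← h1]; exact hoc.2⟩
      · exfalso
        have h0 : decodeF F σ g (x, false) = forced σ (x, false) := dif_neg h
        have h1 : decodeF F σ g (x, true) = forced σ (x, true) := dif_neg h
        have hs : Saddle σ x := by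
          constructor
          · have h' := hoc.1
            rw [h0, forced_false] at h'
            exact of_decide_eq_true h'
          · have h' := hoc.2
            rw [h1, forced_true] at h'
            exact of_decide_eq_true h'
        exact h ((hF x).mpr ⟨hx, hs⟩)
    · rintro ⟨⟨y, hy⟩, hg, rfl⟩
      have h0 : decodeF F σ g (y, false) = stateBit false (g ⟨y, hy⟩) := dif_pos hy
      have h1 : decodeF F σ g (y, true) = stateBit true (g ⟨y, hy⟩) := dif_pos hy
      have hb := (stateBit_both (g ⟨y, hy⟩)).mpr hg
      refine ⟨⟨by rw [h0]; exact hb.1, by rw [h1]; exact hb.2⟩, ?_⟩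
      exact Or.inl ((mem_delta_iff v n (y, false)).mpr ((hF y).mp hy).1)
  rw [NDelta, hset, Set.ncard_coe_finset,
    card_image_of_injective _ Subtype.val_injective]

end Aux

/-- Let `Λ` be a diamond domain, `Δ = Δ(Λ)`, `α > 0` and `i, j ∈ {+,-}`.  For every spin
configuration `σ ∈ Ω^{spin,ij}_Λ`, the sum of `α^{N_Δ(η)}` over all superimposed
configurations `η ∈ Ω^{SI,11}_Δ` compatible with `σ` equals `(2+α)^{#saddle_Λ(σ)}`. -/
theorem stmt_10 (v : Face) (n : ℕ) (hΛ : IsDiamond v n) (α : ℝ) (hα : 0 < α) (i j : Bool)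
    (σ : SpinConf) (hσ : OmegaSpin v n i j σ) :
    (∑' η : {η : SIConf // SIok (deltaOf v n) wiredwired η ∧ Compat σ η},
        α ^ NDelta (deltaOf v n) η.1) = (2 + α) ^ saddleCount v n σ := by
  classical
  obtain ⟨hv, hn0, hn⟩ := hΛ
  have hice : IceRule σ := hσ.1
  have hsad : ∀ x : Vx, x ∉ Xset v n → Saddle σ x :=
    saddle_of_notMem v n σ i j ⟨hv, hn0, hn⟩ hσ
  have hXsfin : {x : Vx | x ∈ Xset v n ∧ Saddle σ x}.Finite :=
    (Xset_finite v n).subset (fun x hx => hx.1)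
  set F : Finset Vx := hXsfin.toFinset with hFdef
  have hF : ∀ x, x ∈ F ↔ x ∈ Xset v n ∧ Saddle σ x := fun x => by
    rw [hFdef, Set.Finite.mem_toFinset]; rfl
  have hsadF : ∀ x ∈ F, Saddle σ x := fun x hx => ((hF x).mp hx).2
  let e : (F → Fin 3) ≃ {η : SIConf // SIok (deltaOf v n) wiredwired η ∧ Compat σ η} :=
    { toFun := fun g => ⟨decodeF F σ g,
        decode_SIok hice hsad F (fun x hx => ((hF x).mp hx).1) g,
        decode_compat F hsadF g⟩
      invFun := fun η x => encodeη η.1 x.1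
      left_inv := fun g => encode_decode_s10 F g
      right_inv := fun η => Subtype.ext (decode_encode_s10 hice F hF hsad η.1 η.2.1 η.2.2) }
  have hcard : F.card = saddleCount v n σ := by
    rw [saddleCount]
    have hs : {x : Vx | InternalVert v n x ∧ Saddle σ x} = ↑F := by
      ext x
      simp only [Set.mem_setOf_eq, Finset.mem_coe, hF x,
        internal_iff v n hv hn0 hn x]
    rw [hs, Set.ncard_coe_finset]
  have key : (∑' η : {η : SIConf // SIok (deltaOf v n) wiredwired η ∧ Compat σ η},
      α ^ NDelta (deltaOf v n) η.1)
      = ∑ g : F → Fin 3, α ^ NDelta (deltaOf v n) (decodeF F σ g) := by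
    rw [← Equiv.tsum_eq e (fun η => α ^ NDelta (deltaOf v n) η.1), tsum_fintype]
    rfl
  rw [key]
  have hsum : ∑ s : Fin 3, (if s = 0 then α else (1:ℝ)) = 2 + α := by
    rw [Fin.sum_univ_three, if_pos rfl, if_neg (by decide), if_neg (by decide)]
    ring
  calc (∑ g : F → Fin 3, α ^ NDelta (deltaOf v n) (decodeF F σ g))
      = ∑ g : F → Fin 3, ∏ x : F, (if g x = 0 then α else 1) := by
        refine Finset.sum_congr rfl fun g _ => ?_
        rw [NDelta_decode F hF g, Finset.prod_ite, Finset.prod_const,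
          Finset.prod_const, one_pow, mul_one]
    _ = ∏ x : F, ∑ s : Fin 3, (if s = 0 then α else 1) := by
        rw [Finset.prod_univ_sum, Fintype.piFinset_univ]
    _ = (2 + α) ^ saddleCount v n σ := by
        rw [hsum, Finset.prod_const, Finset.card_univ, Fintype.card_coe, hcard]


end SixVertex
end
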